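/- Sharpness of LP on bounded sets: with K, h as in the LP KKT system and Z* = {z ∈ Z : Kz ≥ h}, suppose a Hoffman constant H(K) exists, i.e., dist(z, Z*) ≤ H(K)·‖(h − Kz)⁺‖₂ for all z. Then for every R > 0 the LP primal-dual problem is α-sharp on B_R(0) ∩ Z with α = 1/(H(K)·√(1 + 4R²)): that is, α·dist(z, Z*) ≤ ρ_r(z) for all z ∈ Z with ‖z‖ ≤ R and all r ∈ (0, 2R]. -/

import Mathlib

open scoped RealInnerProductSpace Matrix

/-- The primal-dual space `ℝⁿ × ℝᵐ` equipped with the Euclidean (ℓ²-product) norm. -/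
abbrev PDSpace (n m : ℕ) :=
  WithLp 2 (EuclideanSpace ℝ (Fin n) × EuclideanSpace ℝ (Fin m))

/-- Primal component of a primal-dual point. -/
def xPart {n m : ℕ} (z : PDSpace n m) : EuclideanSpace ℝ (Fin n) :=
  ((WithLp.equiv 2 _) z).1

/-- Dual component of a primal-dual point. -/
def yPart {n m : ℕ} (z : PDSpace n m) : EuclideanSpace ℝ (Fin m) :=
  ((WithLp.equiv 2 _) z).2

/-- Componentwise positive part of a Euclidean vector. -/
noncomputable def posPart {k : ℕ} (v : EuclideanSpace ℝ (Fin k)) :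
    EuclideanSpace ℝ (Fin k) :=
  (EuclideanSpace.equiv (Fin k) ℝ).symm fun i => max (v i) 0

/-- The KKT residual `‖(h − Kz)⁺‖₂` of the LP KKT system `Kz ≥ h`: primal nonnegativity,
primal feasibility `Ax = b`, dual feasibility `Aᵀy ≤ c`, and duality gap `cᵀx ≤ bᵀy`. -/
noncomputable def kktError {n m : ℕ} (A : Matrix (Fin m) (Fin n) ℝ)
    (b : EuclideanSpace ℝ (Fin m)) (c : EuclideanSpace ℝ (Fin n))
    (z : PDSpace n m) : ℝ :=
  Real.sqrt (‖posPart (-xPart z)‖ ^ 2 +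
    ‖Matrix.toEuclideanLin A (xPart z) - b‖ ^ 2 +
    ‖posPart (Matrix.toEuclideanLin Aᵀ (yPart z) - c)‖ ^ 2 +
    (max (⟪c, xPart z⟫ - ⟪b, yPart z⟫) 0) ^ 2)

/-! At `z = (x, y)` with `x ≥ 0` the gap `w ↦ L(x, y_w) − L(x_w, y)` is the linear function
`⟪w − z, v⟫` with `v = (Aᵀy − c, b − Ax)`. Moving from `z` along
`g = ((Aᵀy − c)⁺, b − Ax) − t • z`, where `t = (cᵀx − bᵀy)⁺`, keeps `x ≥ 0` for steps up to
`1/t`, raises the gap at rate `⟪g, v⟫ = e²` for the KKT residual `e = ‖(h − Kz)⁺‖₂`, and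
`‖g‖ ≤ √(1 + ‖z‖²)·e` by Cauchy–Schwarz. A step of length `r` thus gives
`ρ_r(z) ≥ e / √(1 + 4R²)`, and the Hoffman bound turns `e` into the distance to `Z*`. -/

lemma max_zero_mul_self (u : ℝ) : max u 0 * u = max u 0 ^ 2 := by
  rcases le_total u 0 with h | h
  · simp [max_eq_right h]
  · rw [max_eq_left h, sq]

lemma add_mul_le_sqrt_mul_sqrt (a t ρ : ℝ) :
    a + t * ρ ≤ √(1 + ρ ^ 2) * √(a ^ 2 + t ^ 2) := by
  rw [← Real.sqrt_mul (by positivity)]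
  exact Real.le_sqrt_of_sq_le (by nlinarith [sq_nonneg (a * ρ - t)])

section PrimalDual

variable {n m : ℕ}

@[simp] lemma xPart_add (z w : PDSpace n m) : xPart (z + w) = xPart z + xPart w := rfl
@[simp] lemma xPart_sub (z w : PDSpace n m) : xPart (z - w) = xPart z - xPart w := rfl
@[simp] lemma xPart_smul (t : ℝ) (z : PDSpace n m) : xPart (t • z) = t • xPart z := rfl

@[simp] lemma xPart_toLp (u : EuclideanSpace ℝ (Fin n)) (v : EuclideanSpace ℝ (Fin m)) :
    xPart (WithLp.toLp 2 (u, v)) = u := rfl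

@[simp] lemma yPart_toLp (u : EuclideanSpace ℝ (Fin n)) (v : EuclideanSpace ℝ (Fin m)) :
    yPart (WithLp.toLp 2 (u, v)) = v := rfl

lemma inner_eq_inner_xPart_add_inner_yPart (z w : PDSpace n m) :
    ⟪z, w⟫ = ⟪xPart z, xPart w⟫ + ⟪yPart z, yPart w⟫ := rfl

lemma norm_toLp_sq (u : EuclideanSpace ℝ (Fin n)) (v : EuclideanSpace ℝ (Fin m)) :
    ‖(WithLp.toLp 2 (u, v) : PDSpace n m)‖ ^ 2 = ‖u‖ ^ 2 + ‖v‖ ^ 2 :=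
  WithLp.prod_norm_sq_eq_of_L2 _

end PrimalDual

section PosPart

variable {k : ℕ}

@[simp] lemma posPart_apply (v : EuclideanSpace ℝ (Fin k)) (i : Fin k) :
    posPart v i = max (v i) 0 := rfl

lemma posPart_apply_nonneg (v : EuclideanSpace ℝ (Fin k)) (i : Fin k) : 0 ≤ posPart v i :=
  le_max_right _ _

lemma posPart_neg_eq_zero {v : EuclideanSpace ℝ (Fin k)} (hv : ∀ i, 0 ≤ v i) :
    posPart (-v) = 0 := by
  ext i
  simp [hv i]

lemma inner_posPart_self (v : EuclideanSpace ℝ (Fin k)) : ⟪posPart v, v⟫ = ‖posPart v‖ ^ 2 := by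
  rw [← real_inner_self_eq_norm_sq]
  simp only [PiLp.inner_apply, RCLike.inner_apply, conj_trivial, posPart_apply]
  exact Finset.sum_congr rfl fun i _ => by rw [mul_comm, max_zero_mul_self, sq]

end PosPart

lemma inner_toEuclideanLin_transpose {n m : ℕ} (A : Matrix (Fin m) (Fin n) ℝ)
    (u : EuclideanSpace ℝ (Fin n)) (v : EuclideanSpace ℝ (Fin m)) :
    ⟪u, Matrix.toEuclideanLin Aᵀ v⟫ = ⟪v, Matrix.toEuclideanLin A u⟫ := by
  rw [real_inner_comm, ← A.conjTranspose_eq_transpose_of_trivial,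
    Matrix.toEuclideanLin_conjTranspose_eq_adjoint, LinearMap.adjoint_inner_left]

def nonnegPrimal (n m : ℕ) : Set (PDSpace n m) := {z | ∀ i, 0 ≤ xPart z i}

/-- The normalized duality gap `ρ_r(z)`. -/
noncomputable def normalizedDualityGap {n m : ℕ}
    (L : EuclideanSpace ℝ (Fin n) → EuclideanSpace ℝ (Fin m) → ℝ) (Z : Set (PDSpace n m))
    (r : ℝ) (z : PDSpace n m) : ℝ :=
  1 / r * sSup ((fun w : PDSpace n m => L (xPart z) (yPart w) - L (xPart w) (yPart z)) ''
    {w | w ∈ Z ∧ ‖w - z‖ ≤ r})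

section LP

variable {n m : ℕ} (A : Matrix (Fin m) (Fin n) ℝ) (b : EuclideanSpace ℝ (Fin m))
  (c : EuclideanSpace ℝ (Fin n))

noncomputable def lpLagrangian (x : EuclideanSpace ℝ (Fin n)) (y : EuclideanSpace ℝ (Fin m)) :
    ℝ :=
  ⟪c, x⟫ + ⟪b, y⟫ - ⟪y, Matrix.toEuclideanLin A x⟫

/-- The gradient of the gap `w ↦ L(x, y_w) − L(x_w, y)` at `z = (x, y)`. -/
noncomputable def lpGapGrad (z : PDSpace n m) : PDSpace n m :=
  WithLp.toLp 2 (Matrix.toEuclideanLin Aᵀ (yPart z) - c, b - Matrix.toEuclideanLin A (xPart z))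

noncomputable def lpResidual (z : PDSpace n m) : PDSpace n m :=
  WithLp.toLp 2
    (posPart (Matrix.toEuclideanLin Aᵀ (yPart z) - c), b - Matrix.toEuclideanLin A (xPart z))

noncomputable def lpGapExcess (z : PDSpace n m) : ℝ := max (⟪c, xPart z⟫ - ⟪b, yPart z⟫) 0

noncomputable def lpAscentDir (z : PDSpace n m) : PDSpace n m :=
  lpResidual A b c z - lpGapExcess b c z • z

lemma lpLagrangian_sub_eq_inner (z w : PDSpace n m) :
    lpLagrangian A b c (xPart z) (yPart w) - lpLagrangian A b c (xPart w) (yPart z) =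
      ⟪w - z, lpGapGrad A b c z⟫ := by
  simp only [lpLagrangian, lpGapGrad, inner_eq_inner_xPart_add_inner_yPart, xPart_toLp,
    yPart_toLp, inner_sub_left, inner_sub_right, inner_toEuclideanLin_transpose, real_inner_comm c,
    real_inner_comm b]
  ring

lemma inner_self_lpGapGrad (z : PDSpace n m) :
    ⟪z, lpGapGrad A b c z⟫ = ⟪b, yPart z⟫ - ⟪c, xPart z⟫ := by
  simp only [lpGapGrad, inner_eq_inner_xPart_add_inner_yPart, xPart_toLp, yPart_toLp,
    inner_sub_right, inner_toEuclideanLin_transpose, real_inner_comm c, real_inner_comm b]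
  ring

lemma inner_lpAscentDir_lpGapGrad (z : PDSpace n m) :
    ⟪lpAscentDir A b c z, lpGapGrad A b c z⟫ =
      ‖lpResidual A b c z‖ ^ 2 + lpGapExcess b c z ^ 2 := by
  have hres : ⟪lpResidual A b c z, lpGapGrad A b c z⟫ = ‖lpResidual A b c z‖ ^ 2 := by
    simp only [lpResidual, lpGapGrad, norm_toLp_sq, inner_eq_inner_xPart_add_inner_yPart,
      xPart_toLp, yPart_toLp, inner_posPart_self, real_inner_self_eq_norm_sq]
  rw [lpAscentDir, inner_sub_left, real_inner_smul_left, hres, inner_self_lpGapGrad,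
    lpGapExcess, ← max_zero_mul_self]
  ring

lemma bddAbove_lpLagrangian_gap (Z : Set (PDSpace n m)) (z : PDSpace n m) (r : ℝ) :
    BddAbove ((fun w : PDSpace n m =>
      lpLagrangian A b c (xPart z) (yPart w) - lpLagrangian A b c (xPart w) (yPart z)) ''
        {w | w ∈ Z ∧ ‖w - z‖ ≤ r}) := by
  refine ⟨r * ‖lpGapGrad A b c z‖, ?_⟩
  rintro _ ⟨w, ⟨-, hwr⟩, rfl⟩
  dsimp only
  rw [lpLagrangian_sub_eq_inner]
  exact (real_inner_le_norm _ _).trans (mul_le_mul_of_nonneg_right hwr (norm_nonneg _))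

lemma le_normalizedDualityGap {Z : Set (PDSpace n m)} {z w : PDSpace n m} {r : ℝ} (hr : 0 ≤ r)
    (hw : w ∈ Z) (hwr : ‖w - z‖ ≤ r) :
    1 / r * ⟪w - z, lpGapGrad A b c z⟫ ≤ normalizedDualityGap (lpLagrangian A b c) Z r z := by
  rw [← lpLagrangian_sub_eq_inner]
  exact mul_le_mul_of_nonneg_left
    (le_csSup (bddAbove_lpLagrangian_gap A b c Z z r) ⟨w, ⟨hw, hwr⟩, rfl⟩) (by positivity)

variable {A b c}

lemma kktError_eq_sqrt {z : PDSpace n m} (hz : z ∈ nonnegPrimal n m) :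
    kktError A b c z = √(‖lpResidual A b c z‖ ^ 2 + lpGapExcess b c z ^ 2) := by
  rw [kktError, posPart_neg_eq_zero hz, lpResidual, norm_toLp_sq, norm_sub_rev b, lpGapExcess]
  congr 1
  simp only [norm_zero]
  ring

lemma lpGapExcess_le_kktError {z : PDSpace n m} (hz : z ∈ nonnegPrimal n m) :
    lpGapExcess b c z ≤ kktError A b c z := by
  rw [kktError_eq_sqrt hz]
  exact Real.le_sqrt_of_sq_le (le_add_of_nonneg_left (sq_nonneg _))

lemma norm_lpAscentDir_le {z : PDSpace n m} (hz : z ∈ nonnegPrimal n m) :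
    ‖lpAscentDir A b c z‖ ≤ √(1 + ‖z‖ ^ 2) * kktError A b c z := by
  have ht : 0 ≤ lpGapExcess b c z := le_max_right _ _
  calc ‖lpAscentDir A b c z‖ ≤ ‖lpResidual A b c z‖ + lpGapExcess b c z * ‖z‖ := by
        rw [← Real.norm_of_nonneg ht, ← norm_smul]
        exact norm_sub_le _ _
    _ ≤ _ := by rw [kktError_eq_sqrt hz]; exact add_mul_le_sqrt_mul_sqrt _ _ _

lemma add_smul_lpAscentDir_mem {z : PDSpace n m} (hz : z ∈ nonnegPrimal n m) {δ : ℝ}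
    (hδ : 0 ≤ δ) (hδt : δ * lpGapExcess b c z ≤ 1) :
    z + δ • lpAscentDir A b c z ∈ nonnegPrimal n m := by
  intro i
  have hx : xPart (z + δ • lpAscentDir A b c z) i =
      (1 - δ * lpGapExcess b c z) * xPart z i +
        δ * posPart (Matrix.toEuclideanLin Aᵀ (yPart z) - c) i := by
    simp only [lpAscentDir, lpResidual, xPart_add, xPart_smul, xPart_sub, xPart_toLp,
      PiLp.add_apply, PiLp.smul_apply, PiLp.sub_apply, smul_eq_mul]
    ring
  rw [hx]
  exact add_nonneg (mul_nonneg (by linarith) (hz i)) (mul_nonneg hδ (posPart_apply_nonneg _ i))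

theorem kktError_le_mul_normalizedDualityGap {z : PDSpace n m} (hz : z ∈ nonnegPrimal n m)
    {D r : ℝ} (hzD : ‖z‖ ≤ D) (hr : 0 < r) (hrD : r ≤ D) :
    kktError A b c z ≤
      √(1 + D ^ 2) * normalizedDualityGap (lpLagrangian A b c) (nonnegPrimal n m) r z := by
  set e := kktError A b c z
  set M := √(1 + D ^ 2)
  have hM : 0 < M := by positivity
  have he0 : 0 ≤ e := Real.sqrt_nonneg _
  rcases he0.eq_or_lt with he | he
  · rw [← he]
    refine mul_nonneg hM.le ?_
    simpa using le_normalizedDualityGap A b c (z := z) hr.le hz (by simpa using hr.le)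
  set δ := r / (M * e)
  have hδ : 0 ≤ δ := by positivity
  have hδMe : δ * (M * e) = r := div_mul_cancel₀ r (by positivity)
  have hδt : δ * lpGapExcess b c z ≤ 1 := by
    calc δ * lpGapExcess b c z ≤ δ * e := by gcongr; exact lpGapExcess_le_kktError hz
      _ = r / M := by rw [eq_div_iff hM.ne', ← hδMe]; ring
      _ ≤ 1 := (div_le_one hM).2 (hrD.trans (Real.le_sqrt_of_sq_le (by linarith)))
  have hstep : ‖δ • lpAscentDir A b c z‖ ≤ r := by
    have hzM : √(1 + ‖z‖ ^ 2) ≤ M := Real.sqrt_le_sqrt (by gcongr)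
    calc ‖δ • lpAscentDir A b c z‖ ≤ δ * (M * e) := by
          rw [norm_smul, Real.norm_of_nonneg hδ]
          gcongr
          exact (norm_lpAscentDir_le hz).trans (by gcongr)
      _ = r := hδMe
  have hgap := le_normalizedDualityGap A b c hr.le (add_smul_lpAscentDir_mem hz hδ hδt)
    (by rwa [add_sub_cancel_left])
  rw [add_sub_cancel_left, real_inner_smul_left, inner_lpAscentDir_lpGapGrad,
    ← Real.sq_sqrt (by positivity : (0 : ℝ) ≤ ‖lpResidual A b c z‖ ^ 2 + lpGapExcess b c z ^ 2),
    ← kktError_eq_sqrt hz] at hgap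
  calc e = M * (1 / r * (δ * (M * e) * e / M)) := by rw [hδMe]; field_simp
    _ = M * (1 / r * (δ * e ^ 2)) := by field_simp
    _ ≤ M * normalizedDualityGap (lpLagrangian A b c) (nonnegPrimal n m) r z := by gcongr

end LP

theorem lp_sharpness_on_bounded_sets_general {n m : ℕ}
    (A : Matrix (Fin m) (Fin n) ℝ)
    (b : EuclideanSpace ℝ (Fin m)) (c : EuclideanSpace ℝ (Fin n))
    (L : EuclideanSpace ℝ (Fin n) → EuclideanSpace ℝ (Fin m) → ℝ)
    (hL : ∀ x y, L x y = ⟪c, x⟫ + ⟪b, y⟫ - ⟪y, Matrix.toEuclideanLin A x⟫)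
    (Z : Set (PDSpace n m)) (hZ : Z = {z | ∀ i, 0 ≤ xPart z i})
    (Zstar : Set (PDSpace n m))
    (HK : ℝ) (hHK : 0 < HK)
    (hHoffman : ∀ z : PDSpace n m, Metric.infDist z Zstar ≤ HK * kktError A b c z)
    (R : ℝ) :
    ∀ z ∈ Z, ‖z‖ ≤ R → ∀ r ∈ Set.Ioc (0 : ℝ) (2 * R),
      (1 / (HK * Real.sqrt (1 + 4 * R ^ 2))) * Metric.infDist z Zstar ≤
        (1 / r) * sSup ((fun w : PDSpace n m =>
            L (xPart z) (yPart w) - L (xPart w) (yPart z)) ''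
          {w | w ∈ Z ∧ ‖w - z‖ ≤ r}) := by
  rintro z hz hzR r ⟨hr, hrR⟩
  subst hZ
  obtain rfl : L = lpLagrangian A b c := funext₂ hL
  have hresidual : kktError A b c z ≤
      √(1 + (2 * R) ^ 2) * normalizedDualityGap (lpLagrangian A b c) (nonnegPrimal n m) r z :=
    kktError_le_mul_normalizedDualityGap hz (by linarith [norm_nonneg z]) hr hrR
  rw [mul_pow, show (2 : ℝ) ^ 2 = 4 by norm_num] at hresidual
  have hN : 0 < √(1 + 4 * R ^ 2) := by positivity
  calc 1 / (HK * √(1 + 4 * R ^ 2)) * Metric.infDist z Zstar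
      ≤ 1 / (HK * √(1 + 4 * R ^ 2)) * (HK * kktError A b c z) := by gcongr; exact hHoffman z
    _ = kktError A b c z / √(1 + 4 * R ^ 2) := by field_simp
    _ ≤ normalizedDualityGap (lpLagrangian A b c) (nonnegPrimal n m) r z := by
      rwa [div_le_iff₀' hN]

/-- sharpness of LP on bounded sets: with `Z* = {z ∈ Z : Kz ≥ h}` nonempty and
a Hoffman constant `H(K)` satisfying `dist(z, Z*) ≤ H(K)·‖(h − Kz)⁺‖₂` for all `z`, for every
`R > 0` the LP primal-dual problem is `α`-sharp on `B_R(0) ∩ Z` with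
`α = 1/(H(K)·√(1 + 4R²))`: i.e. `α·dist(z, Z*) ≤ ρ_r(z)` for all `z ∈ Z` with `‖z‖ ≤ R` and
all `r ∈ (0, 2R]`. -/
theorem lp_sharpness_on_bounded_sets {n m : ℕ}
    (A : Matrix (Fin m) (Fin n) ℝ)
    (b : EuclideanSpace ℝ (Fin m)) (c : EuclideanSpace ℝ (Fin n))
    (L : EuclideanSpace ℝ (Fin n) → EuclideanSpace ℝ (Fin m) → ℝ)
    (hL : ∀ x y, L x y = ⟪c, x⟫ + ⟪b, y⟫ - ⟪y, Matrix.toEuclideanLin A x⟫)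
    (Z : Set (PDSpace n m)) (hZ : Z = {z | ∀ i, 0 ≤ xPart z i})
    (Zstar : Set (PDSpace n m))
    (hZstar : Zstar = {z | (∀ i, 0 ≤ xPart z i) ∧
      Matrix.toEuclideanLin A (xPart z) = b ∧
      (∀ j, Matrix.toEuclideanLin Aᵀ (yPart z) j ≤ c j) ∧
      ⟪c, xPart z⟫ ≤ ⟪b, yPart z⟫})
    (hne : Zstar.Nonempty)
    (HK : ℝ) (hHK : 0 < HK)
    (hHoffman : ∀ z : PDSpace n m, Metric.infDist z Zstar ≤ HK * kktError A b c z)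
    (R : ℝ) (hR : 0 < R) :
    ∀ z ∈ Z, ‖z‖ ≤ R → ∀ r ∈ Set.Ioc (0 : ℝ) (2 * R),
      (1 / (HK * Real.sqrt (1 + 4 * R ^ 2))) * Metric.infDist z Zstar ≤
        (1 / r) * sSup ((fun w : PDSpace n m =>
            L (xPart z) (yPart w) - L (xPart w) (yPart z)) ''
          {w | w ∈ Z ∧ ‖w - z‖ ≤ r}) :=
  lp_sharpness_on_bounded_sets_general A b c L hL Z hZ Zstar HK hHK hHoffman R
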